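/- Let α be a finite alphabet with two distinct letters a and b. Then the following proper inclusions of families of languages over α hold: the monoidal languages are a proper subset of the symmetric definite languages; the symmetric definite languages are a proper subset of the left-sided comets and also a proper subset of the right-sided comets; and the left-sided comets as well as the right-sided comets are each a proper subset of the two-sided comets. -/

import Mathlib

open Language Computability

universe u

variable {α : Type}

/-- The n-fold repetition (power) of a word. -/
def wordPow (y : List α) : ℕ → List α
  | 0 => []
  | n + 1 => y ++ wordPow y n

/-- A star language: the Kleene star of some regular language. -/
def IsStarLang (L : Language α) : Prop :=
  ∃ H : Language α, H.IsRegular ∧ L = H∗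

/-- A left-sided comet. -/
def IsLeftComet (L : Language α) : Prop :=
  ∃ E G : Language α, E.IsRegular ∧ G.IsRegular ∧ G ≠ 0 ∧ G ≠ 1 ∧ L = E * G∗

/-- A right-sided comet. -/
def IsRightComet (L : Language α) : Prop :=
  ∃ G H : Language α, G.IsRegular ∧ H.IsRegular ∧ G ≠ 0 ∧ G ≠ 1 ∧ L = G∗ * H

/-- A two-sided comet. -/
def IsTwoComet (L : Language α) : Prop :=
  ∃ E G H : Language α, E.IsRegular ∧ G.IsRegular ∧ H.IsRegular ∧
    G ≠ 0 ∧ G ≠ 1 ∧ L = E * G∗ * H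

/-- A regular expression is union-free if it is built from the atoms `0` (empty language)
and single letters using only concatenation and Kleene star. -/
def RegularExpression.UnionFree : RegularExpression α → Prop
  | RegularExpression.zero => True
  | RegularExpression.epsilon => False
  | RegularExpression.char _ => True
  | RegularExpression.plus _ _ => False
  | RegularExpression.comp r s => r.UnionFree ∧ s.UnionFree
  | RegularExpression.star r => r.UnionFree

/-- A union-free language: the language of a union-free regular expression. -/
def IsUnionFree (L : Language α) : Prop :=
  ∃ r : RegularExpression α, r.UnionFree ∧ r.matches' = L

/-- A monoidal language. -/
def IsMonoidal (L : Language α) : Prop := L = (⊤ : Language α)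

/-- The language of one-letter words with letters from `X`. -/
def lettersLang (X : Set α) : Language α := {w : List α | ∃ a ∈ X, w = [a]}

/-- A combinational language: `⊤ · X` for a set `X` of one-letter words. -/
def IsCombinational (L : Language α) : Prop :=
  ∃ X : Set α, L = (⊤ : Language α) * lettersLang X

/-- A symmetric definite language: `E · ⊤ · H` with `E, H` regular. -/
def IsSymDef (L : Language α) : Prop :=
  ∃ E H : Language α, E.IsRegular ∧ H.IsRegular ∧ L = E * (⊤ : Language α) * H

/-- A nilpotent language: finite or with finite complement. -/
def IsNilpotentLang (L : Language α) : Prop := L.Finite ∨ (Lᶜ : Language α).Finite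

/-- A definite language: `A ∪ ⊤ · B` with `A, B` finite. -/
def IsDefinite (L : Language α) : Prop :=
  ∃ A B : Language α, A.Finite ∧ B.Finite ∧ L = A + (⊤ : Language α) * B  -- `+` of languages is union

/-- An ordered language: accepted by a DFA with linearly ordered state set
whose transition maps are all monotone. -/
def IsOrdered (L : Language α) : Prop :=
  ∃ (σ : Type) (_ : Fintype σ) (_ : LinearOrder σ) (M : DFA α σ),
    (∀ a : α, Monotone fun q => M.step q a) ∧ M.accepts = L

/-- The non-counting property. -/
def HasNonCounting (L : Language α) : Prop :=
  ∃ k : ℕ, 1 ≤ k ∧ ∀ x y z : List α,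
    (x ++ wordPow y k ++ z ∈ L ↔ x ++ wordPow y (k + 1) ++ z ∈ L)

/-- A non-counting (star-free) regular language. -/
def IsNonCounting (L : Language α) : Prop := L.IsRegular ∧ HasNonCounting L

/-- The power-separating property. -/
def HasPowerSep (L : Language α) : Prop :=
  ∃ m : ℕ, 1 ≤ m ∧ ∀ x : List α,
    (∀ n, m ≤ n → wordPow x n ∉ L) ∨ (∀ n, m ≤ n → wordPow x n ∈ L)

/-- A power-separating regular language. -/
def IsPowerSep (L : Language α) : Prop := L.IsRegular ∧ HasPowerSep L

/-- A suffix-closed (regular) language. -/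
def IsSuffixClosed (L : Language α) : Prop :=
  L.IsRegular ∧ ∀ x y : List α, x ++ y ∈ L → y ∈ L

/-- A circular (regular) language. -/
def IsCircular (L : Language α) : Prop :=
  L.IsRegular ∧ ∀ u v : List α, u ++ v ∈ L → v ++ u ∈ L

/-- A commutative (regular) language. -/
def IsCommutative (L : Language α) : Prop :=
  L.IsRegular ∧ ∀ w ∈ L, ∀ v : List α, w.Perm v → v ∈ L

/-- The reversal of a language. -/
def Reversal (L : Language α) : Language α := {w : List α | ∃ v ∈ L, w = v.reverse}

/-- Two families of languages are incomparable if neither is contained in the other. -/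
def Incomparable (P Q : Language α → Prop) : Prop :=
  (∃ L : Language α, P L ∧ ¬ Q L) ∧ (∃ L : Language α, Q L ∧ ¬ P L)

/-- A finite language. -/
def IsFiniteLang (L : Language α) : Prop := L.Finite

/-!
Regularity of the languages involved rests on closure under concatenation, which follows from
the Myhill–Nerode theorem: the left quotient of `L * M` by `w` is determined by the left quotient
of `L` by `w` together with the set of left quotients of `M` by the suffixes `v` of `w` with
`w = u ++ v`, `u ∈ L`.

A symmetric definite language `L = E * ⊤ * H` absorbs `⊤ * H` on the right, so `L = L * (⊤ * H)∗`
is a left-sided comet; reversal swaps left- and right-sided comets and preserves symmetric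
definiteness. For strictness, `a∗` is a comet of both kinds, but a nonempty `E * ⊤ * H` contains a
word with the letter `b`; and `b a∗` is a two-sided comet, but writing it as `G∗ * H` with `g ∈ G`
nonempty and `h ∈ H` puts the initial `b` of `h` inside `g ++ h` a second time.
-/

namespace Language
section
variable {α : Type*}

theorem leftQuotient_mul (L M : Language α) (w : List α) :
    (L * M).leftQuotient w =
      L.leftQuotient w * M + sSup (M.leftQuotient '' {v | ∃ u ∈ L, w = u ++ v}) := by
  ext y
  simp only [sSup_image', mem_add, mem_iSup, mem_leftQuotient, mem_mul, List.append_eq_append_iff]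
  constructor
  · rintro ⟨u, hu, v, hv, ⟨c, rfl, rfl⟩ | ⟨c, rfl, rfl⟩⟩
    · exact Or.inr ⟨⟨c, u, hu, rfl⟩, hv⟩
    · exact Or.inl ⟨c, hu, v, hv, rfl⟩
  · rintro (⟨c, hc, v, hv, rfl⟩ | ⟨⟨c, u, hu, rfl⟩, hc⟩)
    · exact ⟨w ++ c, hc, v, hv, by simp⟩
    · exact ⟨u, hu, c ++ y, hc, by simp⟩

theorem IsRegular.mul {L M : Language α} (hL : L.IsRegular) (hM : M.IsRegular) :
    (L * M).IsRegular := by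
  rw [isRegular_iff_finite_range_leftQuotient] at *
  refine ((hL.prod hM.finite_subsets).image fun p => p.1 * M + sSup p.2).subset ?_
  rintro _ ⟨w, rfl⟩
  exact ⟨(L.leftQuotient w, _), ⟨⟨w, rfl⟩, Set.image_subset_range _ _⟩,
    (leftQuotient_mul L M w).symm⟩

theorem IsRegular.of_finite {L : Language α} (hL : L.Finite) : L.IsRegular := by
  rw [isRegular_iff_finite_range_leftQuotient]
  have hpre : {x : List α | ∃ w ∈ L, x <+: w}.Finite := by
    refine (hL.biUnion fun w _ => w.inits.finite_toSet).subset ?_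
    rintro x ⟨w, hw, hx⟩
    exact Set.mem_biUnion hw (List.mem_inits _ _ |>.2 hx)
  refine ((hpre.image L.leftQuotient).insert 0).subset ?_
  rintro _ ⟨x, rfl⟩
  by_cases hx : ∃ w ∈ L, x <+: w
  · exact Or.inr ⟨x, hx, rfl⟩
  · exact Or.inl (eq_bot_iff.2 fun y hy => hx ⟨x ++ y, hy, List.prefix_append x y⟩)

theorem isRegular_top : (⊤ : Language α).IsRegular := by
  rw [isRegular_iff_finite_range_leftQuotient]
  exact (Set.finite_singleton ⊤).subset
    (Set.range_subset_iff.2 fun _ => eq_top_iff.2 fun _ _ => trivial)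

theorem isRegular_one : (1 : Language α).IsRegular :=
  .of_finite (Set.finite_singleton [])

theorem isRegular_singleton (w : List α) : ({w} : Language α).IsRegular :=
  .of_finite (Set.finite_singleton w)

@[simp]
theorem reverse_top : (⊤ : Language α).reverse = ⊤ := rfl

variable {G : Language α} {g : List α}

theorem ne_zero_of_mem (hg : g ∈ G) : G ≠ 0 :=
  fun h => notMem_zero g (h ▸ hg)

theorem ne_one_of_mem_of_ne_nil (hg : g ∈ G) (hne : g ≠ []) : G ≠ 1 :=
  fun h => hne ((mem_one g).1 (h ▸ hg))

theorem exists_mem_ne_nil_of_ne_zero_of_ne_one (h0 : G ≠ 0) (h1 : G ≠ 1) :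
    ∃ g ∈ G, g ≠ [] := by
  by_contra! h
  refine h1 (ext fun w => ⟨h w, ?_⟩)
  rintro rfl
  obtain ⟨g, hg⟩ := Set.nonempty_iff_ne_empty.2 h0
  exact h g hg ▸ hg

theorem eq_of_mem_of_mem_kstar_singleton {a x : α} {w : List α}
    (hw : w ∈ ({[a]} : Language α)∗) (hx : x ∈ w) : x = a := by
  obtain ⟨ws, rfl, hws⟩ := mem_kstar.1 hw
  obtain ⟨v, hv, hxv⟩ := List.mem_flatten.1 hx
  obtain rfl : v = [a] := hws v hv
  simpa using hxv

end
end Language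

open Language

variable {L : Language α}

theorem isSymDef_of_isMonoidal (h : IsMonoidal L) : IsSymDef L :=
  ⟨1, 1, isRegular_one, isRegular_one, by rw [mul_one, one_mul]; exact h⟩

theorem not_isMonoidal_singleton_mul_top (a : α) : ¬IsMonoidal ({[a]} * ⊤ : Language α) := by
  intro h
  obtain ⟨x, hx, y, -, hxy⟩ :=
    mem_mul.1 (h.symm ▸ trivial : [] ∈ ({[a]} : Language α) * ⊤)
  exact List.cons_ne_nil a [] ((hx : x = [a]).symm.trans (List.append_eq_nil_iff.1 hxy).1)

theorem isLeftComet_of_mul_le {G : Language α} {g : List α} (hL : L.IsRegular)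
    (hG : G.IsRegular) (hg : g ∈ G) (hne : g ≠ []) (h : L * G ≤ L) : IsLeftComet L :=
  ⟨L, G, hL, hG, ne_zero_of_mem hg, ne_one_of_mem_of_ne_nil hg hne,
    (mul_kstar_le_self h).antisymm' (le_mul_of_one_le_right' one_le_kstar)⟩

theorem IsSymDef.isLeftComet [Nonempty α] (h : IsSymDef L) : IsLeftComet L := by
  obtain ⟨E, H, hE, hH, rfl⟩ := h
  have hL : (E * ⊤ * H).IsRegular := (hE.mul isRegular_top).mul hH
  let a : α := Classical.arbitrary α
  rcases eq_or_ne H 0 with rfl | hH0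
  · exact isLeftComet_of_mul_le hL (isRegular_singleton [a]) rfl (List.cons_ne_nil _ _)
      (by simp)
  · obtain ⟨h, hh⟩ := Set.nonempty_iff_ne_empty.2 hH0
    refine isLeftComet_of_mul_le hL (isRegular_top.mul hH)
      (append_mem_mul (show [a] ∈ (⊤ : Language α) from trivial) hh) (by simp) ?_
    calc E * ⊤ * H * (⊤ * H) = E * (⊤ * H * ⊤) * H := by simp only [mul_assoc]
      _ ≤ E * ⊤ * H := by gcongr; exact le_top

theorem IsSymDef.reverse (h : IsSymDef L) : IsSymDef L.reverse := by
  obtain ⟨E, H, hE, hH, rfl⟩ := h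
  exact ⟨H.reverse, E.reverse, hH.reverse, hE.reverse, by simp [reverse_mul, mul_assoc]⟩

theorem IsLeftComet.reverse (h : IsLeftComet L) : IsRightComet L.reverse := by
  obtain ⟨E, G, hE, hG, h0, h1, rfl⟩ := h
  refine ⟨G.reverse, E.reverse, hG.reverse, hE.reverse, ?_, ?_, by simp [reverse_mul]⟩
  · simpa using reverse_injective.ne h0
  · simpa using reverse_injective.ne h1

theorem IsTwoComet.reverse (h : IsTwoComet L) : IsTwoComet L.reverse := by
  obtain ⟨E, G, H, hE, hG, hH, h0, h1, rfl⟩ := h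
  refine ⟨H.reverse, G.reverse, E.reverse, hH.reverse, hG.reverse, hE.reverse, ?_, ?_,
    by simp [reverse_mul, mul_assoc]⟩
  · simpa using reverse_injective.ne h0
  · simpa using reverse_injective.ne h1

theorem IsSymDef.isRightComet [Nonempty α] (h : IsSymDef L) : IsRightComet L := by
  simpa using h.reverse.isLeftComet.reverse

theorem IsLeftComet.isTwoComet (h : IsLeftComet L) : IsTwoComet L := by
  obtain ⟨E, G, hE, hG, h0, h1, rfl⟩ := h
  exact ⟨E, G, 1, hE, hG, isRegular_one, h0, h1, (mul_one _).symm⟩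

theorem IsRightComet.isTwoComet (h : IsRightComet L) : IsTwoComet L := by
  obtain ⟨G, H, hG, hH, h0, h1, rfl⟩ := h
  exact ⟨1, G, H, isRegular_one, hG, hH, h0, h1, by rw [one_mul]⟩

theorem not_isSymDef_kstar_singleton {a b : α} (hab : a ≠ b) :
    ¬IsSymDef ({[a]} : Language α)∗ := by
  rintro ⟨E, H, -, -, hL⟩
  obtain ⟨eh, heh, h, hh, -⟩ := mem_mul.1 (hL ▸ nil_mem_kstar _ : [] ∈ E * ⊤ * H)
  obtain ⟨e, he, -⟩ := mem_mul.1 heh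
  have hw : e ++ [b] ++ h ∈ ({[a]} : Language α)∗ :=
    hL ▸ append_mem_mul (append_mem_mul he trivial) hh
  exact hab (eq_of_mem_of_mem_kstar_singleton hw (by simp)).symm

theorem not_isRightComet_singleton_mul_kstar_singleton {a b : α} (hab : a ≠ b) :
    ¬IsRightComet ({[b]} * {[a]}∗ : Language α) := by
  rintro ⟨G, H, -, -, hG0, hG1, hL⟩
  have hmem {w : List α} (hw : w ∈ G∗ * H) : ∃ u, (∀ x ∈ u, x = a) ∧ w = b :: u := by
    obtain ⟨_, rfl, u, hu, rfl⟩ := mem_mul.1 (hL ▸ hw)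
    exact ⟨u, fun x => eq_of_mem_of_mem_kstar_singleton hu, rfl⟩
  obtain ⟨g, hg, hne⟩ := exists_mem_ne_nil_of_ne_zero_of_ne_one hG0 hG1
  obtain ⟨-, -, h, hh, -⟩ := mem_mul.1 (hL ▸ append_mem_mul rfl (nil_mem_kstar _) :
    [b] ++ [] ∈ G∗ * H)
  obtain ⟨u, -, rfl⟩ := hmem (append_mem_mul (nil_mem_kstar G) hh)
  obtain ⟨u', hu', hgh⟩ := hmem (append_mem_mul (le_kstar (a := G) hg) hh)
  obtain ⟨c, g', rfl⟩ := List.exists_cons_of_ne_nil hne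
  have hb : b ∈ u' := by
    rw [← (List.cons.inj hgh).2]
    simp
  exact hab (hu' b hb).symm

theorem mon_sydef_comets_chain_general (a b : α) (hab : a ≠ b) :
    (∀ L : Language α, IsMonoidal L → IsSymDef L) ∧
    (∃ L : Language α, IsSymDef L ∧ ¬ IsMonoidal L) ∧
    (∀ L : Language α, IsSymDef L → IsLeftComet L) ∧
    (∃ L : Language α, IsLeftComet L ∧ ¬ IsSymDef L) ∧
    (∀ L : Language α, IsSymDef L → IsRightComet L) ∧
    (∃ L : Language α, IsRightComet L ∧ ¬ IsSymDef L) ∧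
    (∀ L : Language α, IsLeftComet L → IsTwoComet L) ∧
    (∃ L : Language α, IsTwoComet L ∧ ¬ IsLeftComet L) ∧
    (∀ L : Language α, IsRightComet L → IsTwoComet L) ∧
    (∃ L : Language α, IsTwoComet L ∧ ¬ IsRightComet L) := by
  have : Nonempty α := ⟨a⟩
  have ha0 : ({[a]} : Language α) ≠ 0 := ne_zero_of_mem rfl
  have ha1 : ({[a]} : Language α) ≠ 1 := ne_one_of_mem_of_ne_nil rfl (List.cons_ne_nil _ _)
  have hSymDef : IsSymDef ({[a]} * ⊤ : Language α) :=
    ⟨{[a]}, 1, isRegular_singleton _, isRegular_one, (mul_one _).symm⟩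
  have hLeft : IsLeftComet ({[a]} : Language α)∗ :=
    ⟨1, {[a]}, isRegular_one, isRegular_singleton _, ha0, ha1, (one_mul _).symm⟩
  have hRight : IsRightComet ({[a]} : Language α)∗ :=
    ⟨{[a]}, 1, isRegular_singleton _, isRegular_one, ha0, ha1, (mul_one _).symm⟩
  have hTwo : IsTwoComet ({[b]} * {[a]}∗ : Language α) :=
    ⟨{[b]}, {[a]}, 1, isRegular_singleton _, isRegular_singleton _, isRegular_one, ha0, ha1,
      (mul_one _).symm⟩
  have hNotRight := not_isRightComet_singleton_mul_kstar_singleton hab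
  exact ⟨fun _ => isSymDef_of_isMonoidal, ⟨_, hSymDef, not_isMonoidal_singleton_mul_top a⟩,
    fun _ => IsSymDef.isLeftComet, ⟨_, hLeft, not_isSymDef_kstar_singleton hab⟩,
    fun _ => IsSymDef.isRightComet, ⟨_, hRight, not_isSymDef_kstar_singleton hab⟩,
    fun _ => IsLeftComet.isTwoComet,
    ⟨_, hTwo.reverse, fun h => hNotRight (by simpa using h.reverse)⟩,
    fun _ => IsRightComet.isTwoComet, ⟨_, hTwo, hNotRight⟩⟩

/-- `MON ⊂ SYDEF ⊂ LCOM, RCOM ⊂ 2COM`: the chain of proper inclusions. -/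
theorem mon_sydef_comets_chain [Fintype α] (a b : α) (hab : a ≠ b) :
    (∀ L : Language α, IsMonoidal L → IsSymDef L) ∧
    (∃ L : Language α, IsSymDef L ∧ ¬ IsMonoidal L) ∧
    (∀ L : Language α, IsSymDef L → IsLeftComet L) ∧
    (∃ L : Language α, IsLeftComet L ∧ ¬ IsSymDef L) ∧
    (∀ L : Language α, IsSymDef L → IsRightComet L) ∧
    (∃ L : Language α, IsRightComet L ∧ ¬ IsSymDef L) ∧
    (∀ L : Language α, IsLeftComet L → IsTwoComet L) ∧
    (∃ L : Language α, IsTwoComet L ∧ ¬ IsLeftComet L) ∧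
    (∀ L : Language α, IsRightComet L → IsTwoComet L) ∧
    (∃ L : Language α, IsTwoComet L ∧ ¬ IsRightComet L) :=
  mon_sydef_comets_chain_general a b hab
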